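/- Let A be an n×n real matrix, B₁ and B₂ n×1 real matrices, C₂ a p×n real matrix, Â an m×m real matrix, Ĉ a 1×m real matrix, B̂₂ an m×1 real matrix, and D̂₂ ∈ ℝ with D̂₂ ≠ 0. Define Ā = [[A, B₂Ĉ],[0, Â]], B̄₁ = [[B₁],[0]], B̄₂ = [[B₂D̂₂],[B̂₂]], C̄₂ = [C₂, 0], Ψ̄ = [Ā^{r₁−1}B̄₁, Ā^{r₂−1}B̄₂] and Ψ = [A^{r₁−1}B₁, A^{r₂−1}B₂], where r₁, r₂ ≥ 1. If C₂AⁱB₁ = 0 for all 0 ≤ i ≤ r₁−2, C₂AⁱB₂ = 0 for all 0 ≤ i ≤ r₂−2, and the p×2 matrix C₂Ψ has full column rank (rank 2), then the p×2 matrix C̄₂Ψ̄ has full column rank; in fact C̄₂Ψ̄ = C₂Ψ·diag(1, D̂₂). -/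

import Mathlib

open Matrix Finset

/-!
Powers of the block upper-triangular matrix `Ā = [[A, B₂Ĉ], [0, Â]]` are again block
upper-triangular, with top-left block `Aᵏ` and top-right block `∑_{i<k} Aⁱ B₂ Ĉ Â^{k-1-i}`.
The relative-degree condition `C₂ Aⁱ B₂ = 0` for `i ≤ r₂ - 2` kills `C₂` times that top-right
block for `k = r₂ - 1`, so the filter states never reach the output: the columns of `C̄₂Ψ̄` are
`C₂ A^{r₁-1} B₁` and `D̂₂ C₂ A^{r₂-1} B₂`. Multiplying by the invertible `diag(1, D̂₂)`
preserves rank.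
-/

namespace Matrix

variable {R : Type*} [Semiring R] {l n m o : Type*} [Fintype n] [Fintype m]
  [DecidableEq n] [DecidableEq m]

theorem fromBlocks_zero₂₁_pow (A : Matrix n n R) (B : Matrix n m R) (D : Matrix m m R)
    (k : ℕ) :
    fromBlocks A B 0 D ^ k =
      fromBlocks (A ^ k) (∑ i ∈ range k, A ^ i * B * D ^ (k - 1 - i)) 0 (D ^ k) := by
  induction k with
  | zero => simp [fromBlocks_one]
  | succ k ih =>
    rw [pow_succ', ih, fromBlocks_multiply, sum_range_succ']
    congr 1 <;> simp only [pow_succ', Matrix.mul_sum, Matrix.mul_assoc, Matrix.mul_zero,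
      Matrix.zero_mul, add_zero, sum_const_zero, zero_add, pow_zero, Matrix.one_mul,
      Nat.sub_zero, Nat.add_sub_cancel]
    congr 1
    refine sum_congr rfl fun i _ => ?_
    rw [show k - (i + 1) = k - 1 - i by omega]

theorem mul_sum_pow_mul_pow_eq_zero {C : Matrix l n R} {A : Matrix n n R} {B : Matrix n m R}
    (D : Matrix m m R) {k : ℕ} (h : ∀ i < k, C * A ^ i * B = 0) :
    C * ∑ i ∈ range k, A ^ i * B * D ^ (k - 1 - i) = 0 := by
  rw [Matrix.mul_sum]
  refine sum_eq_zero fun i hi => ?_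
  rw [← Matrix.mul_assoc, ← Matrix.mul_assoc, h i (mem_range.mp hi), Matrix.zero_mul]

theorem fromCols_zero_mul_fromBlocks_zero₂₁_pow_mul_fromRows (C : Matrix l n R)
    (A : Matrix n n R) (B : Matrix n m R) (D : Matrix m m R) (U : Matrix n o R)
    (V : Matrix m o R) (k : ℕ) :
    fromCols C (0 : Matrix l m R) * (fromBlocks A B 0 D ^ k * fromRows U V) =
      C * (A ^ k * U) + C * (∑ i ∈ range k, A ^ i * B * D ^ (k - 1 - i)) * V := by
  rw [fromBlocks_zero₂₁_pow, ← Matrix.mul_assoc, fromCols_mul_fromBlocks,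
    fromCols_mul_fromRows]
  simp only [Matrix.zero_mul, add_zero, Matrix.mul_assoc]

end Matrix

theorem stmt_10_general (n m p : ℕ)
    (A : Matrix (Fin n) (Fin n) ℝ) (B₁ B₂ : Matrix (Fin n) (Fin 1) ℝ)
    (C₂ : Matrix (Fin p) (Fin n) ℝ)
    (Ahat : Matrix (Fin m) (Fin m) ℝ) (Chat : Matrix (Fin 1) (Fin m) ℝ)
    (B2hat : Matrix (Fin m) (Fin 1) ℝ) (D2hat : ℝ) (hD : D2hat ≠ 0)
    (r₁ r₂ : ℕ)
    (h2 : ∀ i : ℕ, i + 2 ≤ r₂ → C₂ * A ^ i * B₂ = 0)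
    (Abar : Matrix (Fin n ⊕ Fin m) (Fin n ⊕ Fin m) ℝ)
    (hAbar : Abar = Matrix.fromBlocks A (B₂ * Chat) 0 Ahat)
    (B1bar : Matrix (Fin n ⊕ Fin m) (Fin 1) ℝ) (hB1bar : B1bar = Matrix.fromRows B₁ 0)
    (B2bar : Matrix (Fin n ⊕ Fin m) (Fin 1) ℝ)
    (hB2bar : B2bar = Matrix.fromRows (D2hat • B₂) B2hat)
    (C2bar : Matrix (Fin p) (Fin n ⊕ Fin m) ℝ) (hC2bar : C2bar = Matrix.fromCols C₂ 0)
    (Ψ : Matrix (Fin n) (Fin 1 ⊕ Fin 1) ℝ)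
    (hΨ : Ψ = Matrix.fromCols (A ^ (r₁ - 1) * B₁) (A ^ (r₂ - 1) * B₂))
    (Ψbar : Matrix (Fin n ⊕ Fin m) (Fin 1 ⊕ Fin 1) ℝ)
    (hΨbar : Ψbar = Matrix.fromCols (Abar ^ (r₁ - 1) * B1bar) (Abar ^ (r₂ - 1) * B2bar))
    (hrank : (C₂ * Ψ).rank = 2) :
    (C2bar * Ψbar).rank = 2 ∧
    C2bar * Ψbar
      = C₂ * Ψ * Matrix.fromBlocks (1 : Matrix (Fin 1) (Fin 1) ℝ) 0 0
          (D2hat • (1 : Matrix (Fin 1) (Fin 1) ℝ)) := by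
  have hfilter : C₂ * ∑ i ∈ range (r₂ - 1), A ^ i * (B₂ * Chat) * Ahat ^ (r₂ - 1 - 1 - i) = 0 :=
    mul_sum_pow_mul_pow_eq_zero _ fun i hi => by
      rw [← Matrix.mul_assoc, h2 i (by omega), Matrix.zero_mul]
  have heq : C2bar * Ψbar = C₂ * Ψ * fromBlocks (1 : Matrix (Fin 1) (Fin 1) ℝ) 0 0
      (D2hat • (1 : Matrix (Fin 1) (Fin 1) ℝ)) := by
    rw [hC2bar, hΨbar, hAbar, hB1bar, hB2bar, hΨ, mul_fromCols,
      fromCols_zero_mul_fromBlocks_zero₂₁_pow_mul_fromRows,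
      fromCols_zero_mul_fromBlocks_zero₂₁_pow_mul_fromRows, hfilter, mul_fromCols,
      fromCols_mul_fromBlocks]
    simp only [Matrix.mul_zero, Matrix.zero_mul, add_zero, zero_add, Matrix.mul_one,
      Matrix.mul_smul]
  have hdiag : IsUnit (fromBlocks (1 : Matrix (Fin 1) (Fin 1) ℝ) 0 0
      (D2hat • (1 : Matrix (Fin 1) (Fin 1) ℝ))).det := by
    simp [det_fromBlocks_zero₂₁, hD]
  exact ⟨by rw [heq, rank_mul_eq_left_of_isUnit_det _ _ hdiag, hrank], heq⟩

/-- Full-column-rank claim of Appendix D: if `C₂Ψ` with `Ψ = [A^{r₁−1}B₁, A^{r₂−1}B₂]`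
has full column rank and `D̂₂ ≠ 0`, then the augmented matrix `C̄₂Ψ̄` has full column
rank; in fact `C̄₂Ψ̄ = C₂Ψ·diag(1,D̂₂)`. -/
theorem stmt_10 (n m p : ℕ)
    (A : Matrix (Fin n) (Fin n) ℝ) (B₁ B₂ : Matrix (Fin n) (Fin 1) ℝ)
    (C₂ : Matrix (Fin p) (Fin n) ℝ)
    (Ahat : Matrix (Fin m) (Fin m) ℝ) (Chat : Matrix (Fin 1) (Fin m) ℝ)
    (B2hat : Matrix (Fin m) (Fin 1) ℝ) (D2hat : ℝ) (hD : D2hat ≠ 0)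
    (r₁ r₂ : ℕ) (hr₁ : 1 ≤ r₁) (hr₂ : 1 ≤ r₂)
    (h1 : ∀ i : ℕ, i + 2 ≤ r₁ → C₂ * A ^ i * B₁ = 0)
    (h2 : ∀ i : ℕ, i + 2 ≤ r₂ → C₂ * A ^ i * B₂ = 0)
    (Abar : Matrix (Fin n ⊕ Fin m) (Fin n ⊕ Fin m) ℝ)
    (hAbar : Abar = Matrix.fromBlocks A (B₂ * Chat) 0 Ahat)
    (B1bar : Matrix (Fin n ⊕ Fin m) (Fin 1) ℝ) (hB1bar : B1bar = Matrix.fromRows B₁ 0)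
    (B2bar : Matrix (Fin n ⊕ Fin m) (Fin 1) ℝ)
    (hB2bar : B2bar = Matrix.fromRows (D2hat • B₂) B2hat)
    (C2bar : Matrix (Fin p) (Fin n ⊕ Fin m) ℝ) (hC2bar : C2bar = Matrix.fromCols C₂ 0)
    (Ψ : Matrix (Fin n) (Fin 1 ⊕ Fin 1) ℝ)
    (hΨ : Ψ = Matrix.fromCols (A ^ (r₁ - 1) * B₁) (A ^ (r₂ - 1) * B₂))
    (Ψbar : Matrix (Fin n ⊕ Fin m) (Fin 1 ⊕ Fin 1) ℝ)
    (hΨbar : Ψbar = Matrix.fromCols (Abar ^ (r₁ - 1) * B1bar) (Abar ^ (r₂ - 1) * B2bar))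
    (hrank : (C₂ * Ψ).rank = 2) :
    (C2bar * Ψbar).rank = 2 ∧
    C2bar * Ψbar
      = C₂ * Ψ * Matrix.fromBlocks (1 : Matrix (Fin 1) (Fin 1) ℝ) 0 0
          (D2hat • (1 : Matrix (Fin 1) (Fin 1) ℝ)) :=
  stmt_10_general n m p A B₁ B₂ C₂ Ahat Chat B2hat D2hat hD r₁ r₂ h2 Abar hAbar B1bar hB1bar B2bar
    hB2bar C2bar hC2bar Ψ hΨ Ψbar hΨbar hrank
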